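/- Let p be a prime, R a strongly unit nil-clean ring in which the element p·1 is nilpotent, and G a locally finite p-group (every finitely generated subgroup of G is finite and every element of G has order a power of p). Then the group ring RG is strongly unit nil-clean. -/

import Mathlib

/-- An element `x` of a ring is *strongly nil-clean* if `x = e + b` where `e` is an
idempotent, `b` is nilpotent, and `e` and `b` commute. -/
def IsStronglyNilClean {R : Type*} [Ring R] (x : R) : Prop :=
  ∃ e b : R, IsIdempotentElem e ∧ IsNilpotent b ∧ e * b = b * e ∧ x = e + b

/-- A ring `R` is *strongly unit nil-clean* if for every `x : R` there is a unit `u`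
such that `u * x` is strongly nil-clean. -/
def StronglyUnitNilClean (R : Type*) [Ring R] : Prop :=
  ∀ x : R, ∃ u : Rˣ, IsStronglyNilClean ((u : R) * x)

/-- A ring `R` is *unit-regular* if every `a : R` satisfies `a = a * u * a` for some unit `u`. -/
def UnitRegular (R : Type*) [Ring R] : Prop :=
  ∀ a : R, ∃ u : Rˣ, a = a * (u : R) * a

/-- A group is *locally finite* if every finitely generated subgroup is finite. -/
def LocallyFiniteGroup (G : Type*) [Group G] : Prop :=
  ∀ H : Subgroup G, H.FG → (H : Set G).Finite

/-- A subset `T` of a ring is *nilpotent* if there is `n ≥ 1` such that every product of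
`n` elements of `T` is zero. -/
def IsNilpotentSubset {R : Type*} [Ring R] (T : Set R) : Prop :=
  ∃ n : ℕ, 0 < n ∧ ∀ l : List R, (∀ a ∈ l, a ∈ T) → l.length = n → l.prod = 0

/-- A subset `S` of a ring is *locally nilpotent* if the non-unital subring generated by
any finite subset of `S` is nilpotent. -/
def IsLocallyNilpotentSet {R : Type*} [Ring R] (S : Set R) : Prop :=
  ∀ F : Finset R, (F : Set R) ⊆ S →
    IsNilpotentSubset ((NonUnitalSubring.closure (F : Set R) : Set R))

/-- A ring is *NI* if the set of nilpotent elements forms a two-sided ideal. -/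
def IsNIRing (R : Type*) [Ring R] : Prop :=
  ∃ I : TwoSidedIdeal R, ∀ x : R, x ∈ I ↔ IsNilpotent x

/-- A ring is *weakly 2-primal* if its set of nilpotent elements is a two-sided ideal
which is moreover locally nilpotent. -/
def Weakly2Primal (R : Type*) [Ring R] : Prop :=
  IsNIRing R ∧ IsLocallyNilpotentSet {x : R | IsNilpotent x}

/-!
Strong nil-cleanness of `x` only depends on `x - x ^ 2` being nilpotent: an idempotent can be
lifted modulo the nilradical of the commutative ring `ℤ[x]`. Writing `ε : RG → R` for the
augmentation, a unit `u` of `R` with `u * ε x` strongly nil-clean, viewed in `RG`, makes `ε` of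
`y - y ^ 2` nilpotent for `y = u * x`, so it suffices that the augmentation ideal of `RG` is nil.
Each element of `RG` lives in `RH` for a finite `p`-subgroup `H`, and there one inducts on `|H|`:
for `z` central of order `p`, the kernel of `RH → R[H/⟨z⟩]` is generated by `z - 1`, which is
central, and nilpotent because `(z - 1) ^ p ∈ p • RH`.
-/

section StronglyNilClean

variable {R : Type*} [Ring R]

theorem IsStronglyNilClean.isNilpotent_sub_sq {x : R} (h : IsStronglyNilClean x) :
    IsNilpotent (x - x ^ 2) := by
  obtain ⟨e, b, he, hb, heb, rfl⟩ := h
  have key : e + b - (e + b) ^ 2 = b * (1 - e - e - b) := by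
    linear_combination (norm := noncomm_ring) -he.eq - heb
  rw [key]
  exact Commute.isNilpotent_mul_right
    ((((Commute.one_right b).sub_right heb.symm).sub_right heb.symm).sub_right (.refl b)) hb

theorem exists_isIdempotentElem_isNilpotent_sub_of_isNilpotent_sub_sq {S : Type*} [CommRing S]
    {x : S} (h : IsNilpotent (x - x ^ 2)) : ∃ e : S, IsIdempotentElem e ∧ IsNilpotent (x - e) := by
  let f := Ideal.Quotient.mk (nilradical S)
  have hf : ∀ y ∈ RingHom.ker f, IsNilpotent y := fun y hy => by
    rwa [Ideal.mk_ker, mem_nilradical] at hy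
  have hfx : IsIdempotentElem (f x) := by
    rw [IsIdempotentElem, ← map_mul, eq_comm, ← sub_eq_zero, ← map_sub,
      Ideal.Quotient.eq_zero_iff_mem, mem_nilradical, ← sq]
    exact h
  obtain ⟨e, he, hfe⟩ := exists_isIdempotentElem_eq_of_ker_isNilpotent f hf (f x) ⟨x, rfl⟩ hfx
  exact ⟨e, he, hf _ (by rw [RingHom.mem_ker, map_sub, hfe, sub_self])⟩

open scoped IsMulCommutative in
theorem IsStronglyNilClean.of_isNilpotent_sub_sq {x : R} (h : IsNilpotent (x - x ^ 2)) :
    IsStronglyNilClean x := by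
  let S := Subring.closure {x}
  have := Subring.isMulCommutative_closure (s := {x}) (by simp)
  let x' : S := ⟨x, Subring.subset_closure rfl⟩
  obtain ⟨e, he, hxe⟩ := exists_isIdempotentElem_isNilpotent_sub_of_isNilpotent_sub_sq (x := x')
    ((IsNilpotent.map_iff (f := S.subtype) Subtype.val_injective).mp h)
  exact ⟨e, x - e, he.map S.subtype, hxe.map S.subtype,
    congrArg Subtype.val (mul_comm e (x' - e)), (add_sub_cancel _ _).symm⟩

theorem isStronglyNilClean_iff_isNilpotent_sub_sq {x : R} :
    IsStronglyNilClean x ↔ IsNilpotent (x - x ^ 2) :=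
  ⟨IsStronglyNilClean.isNilpotent_sub_sq, IsStronglyNilClean.of_isNilpotent_sub_sq⟩

theorem isNilpotent_sub_one_of_pow_prime_eq_one {p : ℕ} (hp : p.Prime) (hpR : IsNilpotent (p : R))
    {a : R} (ha : a ^ p = 1) : IsNilpotent (a - 1) := by
  obtain ⟨s, hs⟩ := (Commute.one_left (a - 1)).exists_add_pow_prime_eq hp
  rw [add_sub_cancel, ha, one_pow, mul_one, add_assoc, left_eq_add, add_eq_zero_iff_eq_neg,
    mul_assoc, ← mul_neg] at hs
  exact .of_pow (hs ▸ (Nat.cast_commute p _).isNilpotent_mul_right hpR)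

end StronglyNilClean

theorem IsPGroup.exists_mem_center_orderOf_eq {p : ℕ} [Fact p.Prime] {G : Type*} [Group G]
    [Finite G] [Nontrivial G] (hG : IsPGroup p G) : ∃ z ∈ Subgroup.center G, orderOf z = p := by
  obtain ⟨n, hn, hcard⟩ :=
    (hG.to_subgroup (Subgroup.center G)).nontrivial_iff_card.mp hG.center_nontrivial
  obtain ⟨z, hz⟩ := exists_prime_orderOf_dvd_card' p (hcard ▸ dvd_pow_self p hn.ne')
  exact ⟨z, z.2, (Subgroup.orderOf_coe z).trans hz⟩

theorem Subgroup.normal_zpowers_of_mem_center {G : Type*} [Group G] {z : G}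
    (hz : z ∈ Subgroup.center G) : (Subgroup.zpowers z).Normal :=
  ⟨fun n hn g => by
    rwa [Subgroup.mem_center_iff.mp (Subgroup.zpowers_le.mpr hz hn) g, mul_inv_cancel_right]⟩

namespace MonoidAlgebra

variable {R : Type*} [Ring R]

variable (R) in
noncomputable def augmentation (G : Type*) [Monoid G] : MonoidAlgebra R G →+* R :=
  liftNCRingHom (RingHom.id R) 1 fun _ _ => Commute.one_right _

@[simp]
theorem augmentation_single {G : Type*} [Monoid G] (g : G) (r : R) :
    augmentation R G (single g r) = r := by
  simp [augmentation, liftNCRingHom_single]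

@[simp]
theorem augmentation_mapDomainRingHom {G H : Type*} [Monoid G] [Monoid H] (f : G →* H)
    (x : MonoidAlgebra R G) : augmentation R H (mapDomainRingHom R f x) = augmentation R G x := by
  induction x using induction_linear with
  | zero => simp
  | add x y hx hy => simp only [map_add, hx, hy]
  | single g r => simp

theorem eq_single_one_augmentation {G : Type*} [Monoid G] [Subsingleton G]
    (t : MonoidAlgebra R G) : t = single 1 (augmentation R G t) := by
  induction t using induction_linear with
  | zero => simp
  | add x y hx hy => rw [map_add, single_add, ← hx, ← hy]
  | single g r => rw [Subsingleton.elim g 1, augmentation_single]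

theorem exists_eq_mul_sub_one_of_mapDomain_mk_eq_zero {G : Type*} [Group G] {z : G}
    (hz : IsOfFinOrder z) {w : MonoidAlgebra R G}
    (hw : mapDomain (QuotientGroup.mk : G → G ⧸ Subgroup.zpowers z) w = 0) :
    ∃ r, w = r * (of R G z - 1) := by
  have key : ∀ w : MonoidAlgebra R G, ∃ r, w - mapDomain Quotient.out
      (mapDomain (QuotientGroup.mk : G → G ⧸ Subgroup.zpowers z) w) = r * (of R G z - 1) := by
    intro w
    induction w using induction_linear with
    | zero => exact ⟨0, by simp⟩
    | add w₁ w₂ h₁ h₂ =>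
      obtain ⟨r₁, hr₁⟩ := h₁
      obtain ⟨r₂, hr₂⟩ := h₂
      refine ⟨r₁ + r₂, ?_⟩
      rw [mapDomain_add, mapDomain_add, add_mul, ← hr₁, ← hr₂]
      abel
    | single g r =>
      obtain ⟨⟨n, hn⟩, hout⟩ := QuotientGroup.mk_out_eq_mul (Subgroup.zpowers z) g
      obtain ⟨j, rfl⟩ := hz.mem_powers_iff_mem_zpowers.mpr hn
      refine ⟨-(single g r * ∑ i ∈ Finset.range j, of R G z ^ i), ?_⟩
      rw [mapDomain_single, mapDomain_single, hout, neg_mul, mul_assoc, geom_sum_mul, ← map_pow,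
        of_apply, mul_sub, single_mul_single, mul_one, mul_one, neg_sub]
  obtain ⟨r, hr⟩ := key w
  rw [hw, mapDomain_zero, sub_zero] at hr
  exact ⟨r, hr⟩

theorem isNilpotent_of_augmentation_eq_zero_of_finite {p : ℕ} [hp : Fact p.Prime]
    (hpR : IsNilpotent (p : R)) {H : Type*} [Group H] [Finite H] (hH : IsPGroup p H)
    {t : MonoidAlgebra R H} (ht : augmentation R H t = 0) : IsNilpotent t := by
  induction hn : Nat.card H using Nat.strong_induction_on generalizing H with
  | _ n ih =>
  rcases subsingleton_or_nontrivial H with _ | _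
  · rw [eq_single_one_augmentation t, ht, single_zero]
    exact IsNilpotent.zero
  obtain ⟨z, hzc, hzp⟩ := hH.exists_mem_center_orderOf_eq
  have := Subgroup.normal_zpowers_of_mem_center hzc
  have hcard : Nat.card (H ⧸ Subgroup.zpowers z) < n := by
    have := (Subgroup.zpowers z).card_eq_card_quotient_mul_card_subgroup
    rw [Nat.card_zpowers, hzp, hn] at this
    have := hp.out.two_le
    have : 0 < n := hn ▸ Nat.card_pos
    nlinarith
  let π := mapDomainRingHom R (QuotientGroup.mk' (Subgroup.zpowers z))
  obtain ⟨m, hm⟩ := ih _ hcard (hH.to_quotient _) (t := π t)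
    (by rw [augmentation_mapDomainRingHom, ht]) rfl
  obtain ⟨r, hr⟩ := exists_eq_mul_sub_one_of_mapDomain_mk_eq_zero (isOfFinOrder_of_finite z)
    (w := t ^ m) (by rw [← hm, ← map_pow]; rfl)
  have hc : IsNilpotent (of R H z - 1) := by
    refine isNilpotent_sub_one_of_pow_prime_eq_one hp.out ?_ ?_
    · simpa using hpR.map (singleOneRingHom (M := H))
    · rw [← map_pow, ← hzp, pow_orderOf_eq_one, map_one]
  have hcomm : Commute r (of R H z - 1) :=
    ((of_commute (fun g => (Subgroup.mem_center_iff.mp hzc g).symm) r).sub_left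
      (.one_left r)).symm
  exact .of_pow (hr ▸ hcomm.isNilpotent_mul_left hc)

theorem isNilpotent_of_augmentation_eq_zero {p : ℕ} [Fact p.Prime] (hpR : IsNilpotent (p : R))
    {G : Type*} [Group G] (hlf : LocallyFiniteGroup G) (hG : IsPGroup p G)
    {t : MonoidAlgebra R G} (ht : augmentation R G t = 0) : IsNilpotent t := by
  classical
  let K := Subgroup.closure (t.coeff.support : Set G)
  have : Finite K := (hlf K ⟨t.coeff.support, rfl⟩).to_subtype
  have ht' : mapDomainRingHom R K.subtype (comapDomain K.subtype K.subtype_injective t) = t :=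
    mapDomain_comapDomain (fun g hg => ⟨⟨g, Subgroup.subset_closure hg⟩, rfl⟩) _
  rw [← ht'] at ht ⊢
  rw [augmentation_mapDomainRingHom] at ht
  exact (isNilpotent_of_augmentation_eq_zero_of_finite hpR (hG.to_subgroup K) ht).map _

end MonoidAlgebra

open MonoidAlgebra

theorem monoidAlgebra_stronglyUnitNilClean_of_pGroup
    (p : ℕ) (hp : p.Prime) (R : Type*) [Ring R]
    (hR : StronglyUnitNilClean R) (hpnil : IsNilpotent ((p : R)))
    (G : Type*) [Group G] (hlf : LocallyFiniteGroup G)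
    (hpG : ∀ g : G, ∃ k : ℕ, orderOf g = p ^ k) :
    StronglyUnitNilClean (MonoidAlgebra R G) := by
  have := Fact.mk hp
  intro x
  obtain ⟨u, hu⟩ := hR (augmentation R G x)
  refine ⟨Units.map (singleOneRingHom : R →+* MonoidAlgebra R G).toMonoidHom u, ?_⟩
  rw [isStronglyNilClean_iff_isNilpotent_sub_sq] at hu ⊢
  set y := (Units.map (singleOneRingHom : R →+* MonoidAlgebra R G).toMonoidHom u :
    MonoidAlgebra R G) * x
  have hy : augmentation R G y = u * augmentation R G x := by simp [y]
  obtain ⟨n, hn⟩ : IsNilpotent (augmentation R G (y - y ^ 2)) := by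
    rwa [map_sub, map_pow, hy]
  refine IsNilpotent.of_pow (isNilpotent_of_augmentation_eq_zero hpnil hlf
    (IsPGroup.iff_orderOf.mpr hpG) (t := (y - y ^ 2) ^ n) ?_)
  rw [map_pow, hn]
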